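/- Let K be an infinite field, let n ≥ 1, d ≥ 1, and fix a d^{n}-cage over K. Then the set of homogeneous polynomials P ∈ K[x_0,…,x_n] of degree d (together with the zero polynomial) satisfying P(p_I) = 0 for all I ∈ {1,…,d}^n is exactly the K-linear span of 𝓛_1,…,𝓛_n; moreover 𝓛_1,…,𝓛_n are linearly independent over K, so this space of polynomials has dimension n. -/

import Mathlib

/-!
Generalise to cages in which colour `j` has the lines indexed by a finset `S j`, and to forms `P`
of degree `e ≤ #(S j)` for all `j`: such a form vanishing at all nodes lies in the span of those
`𝓛_j` with `#(S j) = e`. Induct on `e`, then on the number of colours. Restricted to the hyperplane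
`ℓ = 0` of a line `ℓ` of colour `0`, the other colours form a cage with one colour fewer, so
`P ≡ T` on `ℓ = 0` for some `T` in the span, and `P - T = ℓ Q`. As `ℓ` does not vanish at the
nodes off it, `Q` has degree `e - 1` and vanishes at all nodes of the cage with `ℓ` removed.

The `𝓛_j` are independent: on the line through two nodes that differ only in colour `j`, all
`𝓛_j'` with `j' ≠ j` vanish while `𝓛_j` does not vanish identically.
-/

open MvPolynomial Finset Fintype

namespace MvPolynomial

variable {K : Type*} [Field K] {σ : Type*}

theorem IsHomogeneous.eval_smul [Fintype σ] {P : MvPolynomial σ K} {e : ℕ}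
    (hP : P.IsHomogeneous e) (c : K) (v : σ → K) : eval (c • v) P = c ^ e * eval v P := by
  simp only [eval_eq', Pi.smul_apply, smul_eq_mul, mul_pow, prod_mul_distrib,
    prod_pow_eq_pow_sum, mul_sum]
  refine sum_congr rfl fun s hs => ?_
  have hdeg : ∑ k, s k = e := by
    rw [← hP (mem_support_iff.mp hs), Finsupp.weight_apply, Finsupp.sum_fintype] <;> simp
  rw [hdeg]
  ring

theorem IsHomogeneous.exists_eq_sum_smul_X [Fintype σ] {L : MvPolynomial σ K}
    (hL : L.IsHomogeneous 1) : ∃ a : σ → K, L = ∑ k, a k • X k := by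
  have hmem := (mem_homogeneousSubmodule 1 L).2 hL
  rw [homogeneousSubmodule_one_eq_span_X, Submodule.mem_span_range_iff_exists_fun] at hmem
  obtain ⟨a, ha⟩ := hmem
  exact ⟨a, ha.symm⟩

theorem eval_sum_smul_X [Fintype σ] (a v : σ → K) :
    eval v (∑ k, a k • X k) = ∑ k, a k * v k := by
  simp [smul_eval]

theorem IsHomogeneous.eval_add_smul [Fintype σ] {L : MvPolynomial σ K}
    (hL : L.IsHomogeneous 1) (v w : σ → K) (t : K) :
    eval (v + t • w) L = eval v L + t * eval w L := by
  obtain ⟨a, rfl⟩ := hL.exists_eq_sum_smul_X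
  simp only [eval_sum_smul_X, Pi.add_apply, Pi.smul_apply, smul_eq_mul, mul_sum,
    ← sum_add_distrib]
  exact sum_congr rfl fun k _ => by ring

attribute [local instance] MvPolynomial.gradedAlgebra in
theorem IsHomogeneous.exists_eq_mul_of_dvd {L P : MvPolynomial σ K} {m e : ℕ}
    (hL : L.IsHomogeneous m) (hP : P.IsHomogeneous (m + e)) (hdvd : L ∣ P) :
    ∃ Q : MvPolynomial σ K, Q.IsHomogeneous e ∧ P = L * Q := by
  obtain ⟨Q, rfl⟩ := hdvd
  refine ⟨homogeneousComponent e Q, homogeneousComponent_isHomogeneous e Q, ?_⟩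
  have := DirectSum.coe_decompose_mul_add_of_left_mem (homogeneousSubmodule σ K)
    (b := Q) (j := e) ((mem_homogeneousSubmodule m L).2 hL)
  rw [← homogeneousComponent_eq_self hP]
  simpa only [DirectSum.decompose, Equiv.coe_fn_mk, decomposition.decompose'_apply] using this

theorem sub_bind₁_mem {R : Type*} [CommRing R] {I : Ideal (MvPolynomial σ R)}
    {f : σ → MvPolynomial σ R} (hf : ∀ k, X k - f k ∈ I) (P : MvPolynomial σ R) :
    P - bind₁ f P ∈ I := by
  have : (Ideal.Quotient.mkₐ R I).comp (bind₁ f) = Ideal.Quotient.mkₐ R I :=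
    algHom_ext fun k => by
      simpa [Ideal.Quotient.eq, ← neg_mem_iff (x := f k - X k)] using hf k
  rw [← Ideal.Quotient.eq, ← Ideal.Quotient.mkₐ_eq_mk R]
  exact (DFunLike.congr_fun this P).symm

end MvPolynomial

theorem Function.update_mem_piFinset {κ α : Type*} [Fintype κ] [DecidableEq κ]
    {S : κ → Finset α} {I : κ → α} (hI : I ∈ piFinset S) {j : κ} {i : α} (hi : i ∈ S j) :
    Function.update I j i ∈ piFinset S := by
  refine mem_piFinset.mpr fun j' => ?_
  rcases eq_or_ne j' j with rfl | h
  · simpa using hi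
  · simpa [h] using mem_piFinset.mp hI j'

theorem update_erase_subset {κ α : Type*} [DecidableEq κ] [DecidableEq α] (S : κ → Finset α)
    (j₀ : κ) (i₀ : α) (j : κ) : Function.update S j₀ ((S j₀).erase i₀) j ⊆ S j := by
  rcases eq_or_ne j j₀ with rfl | h
  · simp [erase_subset]
  · simp [h]

theorem Fin.cons_mem_piFinset {α : Type*} {m : ℕ} {S : Fin (m + 1) → Finset α} {i₀ : α}
    (hi₀ : i₀ ∈ S 0) {I : Fin m → α} (hI : I ∈ piFinset fun j => S j.succ) :
    (Fin.cons i₀ I : Fin (m + 1) → α) ∈ piFinset S := by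
  rw [← Fin.cons_self_tail S]
  exact Fin.cons_mem_piFinset_cons.mpr ⟨hi₀, hI⟩

section Field

variable {K : Type*} [Field K]

theorem LinearIndependent.map_tail {M M' : Type*} [AddCommGroup M] [Module K M]
    [AddCommGroup M'] [Module K M'] {m : ℕ} {v : Fin (m + 1) → M} (hv : LinearIndependent K v)
    {f : M →ₗ[K] M'} (hf : ∀ y ∈ Submodule.span K (Set.range (Fin.tail v)), f y = 0 → y ∈ K ∙ v 0) :
    LinearIndependent K (f ∘ Fin.tail v) := by
  rw [linearIndependent_finSucc] at hv
  have hv₀ : v 0 ≠ 0 := fun h => hv.2 (h ▸ Submodule.zero_mem _)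
  have hdisj := (Submodule.disjoint_span_singleton' hv₀).mpr hv.2
  refine hv.1.map (Submodule.disjoint_def.mpr fun y hy hker => ?_)
  exact Submodule.disjoint_def.mp hdisj y hy (hf y hy hker)

theorem exists_prod_add_mul_ne_zero [Infinite K] {ι : Type*} (s : Finset ι) {x y : ι → K}
    (hxy : ∀ i ∈ s, x i ≠ 0 ∨ y i ≠ 0) : ∃ t : K, ∏ i ∈ s, (x i + t * y i) ≠ 0 := by
  by_contra! h
  have hfactor : ∀ i ∈ s, Polynomial.C (x i) + Polynomial.X * Polynomial.C (y i) ≠ 0 := by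
    intro i hi hzero
    have h0 : x i = 0 := by simpa using congrArg (Polynomial.coeff · 0) hzero
    have h1 : y i = 0 := by simpa using congrArg (Polynomial.coeff · 1) hzero
    simpa [h0, h1] using hxy i hi
  refine prod_ne_zero_iff.mpr hfactor (Polynomial.funext fun t => ?_)
  simp only [Polynomial.eval_prod, Polynomial.eval_add, Polynomial.eval_mul, Polynomial.eval_C,
    Polynomial.eval_X, Polynomial.eval_zero]
  exact h t

end Field

section Hyperplane

variable {K : Type*} [Field K] {σ : Type*} [Fintype σ] [DecidableEq σ] (a : σ → K) (k₀ : σ)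

/-- The substitution `x_{k₀} ↦ -(a k₀)⁻¹ ∑_{k ≠ k₀} a k x_k`: it restricts polynomials to the
hyperplane `∑ a k x_k = 0`, with the coordinates other than `k₀` as coordinates on it. -/
noncomputable def hyperplaneSubst (k : σ) : MvPolynomial {k // k ≠ k₀} K :=
  if h : k = k₀ then C (-(a k₀)⁻¹) * ∑ k' : {k // k ≠ k₀}, C (a k') * X k' else X ⟨k, h⟩

noncomputable def hyperplanePoint (v : {k // k ≠ k₀} → K) (k : σ) : K :=
  eval v (hyperplaneSubst a k₀ k)

theorem eval_bind₁_hyperplaneSubst (v : {k // k ≠ k₀} → K) (P : MvPolynomial σ K) :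
    eval v (bind₁ (hyperplaneSubst a k₀) P) = eval (hyperplanePoint a k₀ v) P := by
  change aeval v (bind₁ _ P) = aeval _ P
  rw [aeval_bind₁]
  rfl

theorem isHomogeneous_hyperplaneSubst (k : σ) : (hyperplaneSubst a k₀ k).IsHomogeneous 1 := by
  unfold hyperplaneSubst
  split_ifs
  · exact (IsHomogeneous.sum _ _ _ fun k' _ => isHomogeneous_C_mul_X _ _).C_mul _
  · exact isHomogeneous_X K _

@[simp]
theorem hyperplanePoint_val (v : {k // k ≠ k₀} → K) (k : {k // k ≠ k₀}) :
    hyperplanePoint a k₀ v k = v k := by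
  simp [hyperplanePoint, hyperplaneSubst, k.2]

variable {a k₀}

theorem MvPolynomial.IsHomogeneous.bind₁_hyperplaneSubst {P : MvPolynomial σ K} {n : ℕ}
    (hP : P.IsHomogeneous n) : (bind₁ (hyperplaneSubst a k₀) P).IsHomogeneous n := by
  simpa using hP.aeval _ (isHomogeneous_hyperplaneSubst a k₀)

theorem sum_mul_hyperplanePoint (ha : a k₀ ≠ 0) (v : {k // k ≠ k₀} → K) :
    ∑ k, a k * hyperplanePoint a k₀ v k = 0 := by
  rw [Fintype.sum_eq_add_sum_subtype_ne _ k₀]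
  simp only [hyperplanePoint_val]
  simp [hyperplanePoint, hyperplaneSubst, ha]

theorem hyperplanePoint_restrict (ha : a k₀ ≠ 0) {w : σ → K} (hw : ∑ k, a k * w k = 0) :
    hyperplanePoint a k₀ (fun k => w k) = w := by
  funext k
  by_cases hk : k = k₀
  · subst hk
    rw [Fintype.sum_eq_add_sum_subtype_ne _ k] at hw
    have hsum : ∑ k' : {k' // k' ≠ k}, a k' * w k' = -(a k * w k) := by linear_combination hw
    simp [hyperplanePoint, hyperplaneSubst, hsum, ha]
  · exact hyperplanePoint_val a k₀ _ ⟨k, hk⟩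

theorem dvd_of_bind₁_hyperplaneSubst_eq_zero (ha : a k₀ ≠ 0) {P : MvPolynomial σ K}
    (hP : bind₁ (hyperplaneSubst a k₀) P = 0) : (∑ k, a k • X k : MvPolynomial σ K) ∣ P := by
  rw [← Ideal.mem_span_singleton]
  have hsub := sub_bind₁_mem (I := Ideal.span {∑ k, a k • X k})
    (f := fun k => rename Subtype.val (hyperplaneSubst a k₀ k)) ?_ P
  · rwa [← rename_bind₁, hP, map_zero, sub_zero] at hsub
  intro k
  by_cases hk : k = k₀
  · subst hk
    rw [Ideal.mem_span_singleton, Fintype.sum_eq_add_sum_subtype_ne _ k]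
    refine ⟨C (a k)⁻¹, ?_⟩
    have hinv : C (a k) * C (a k)⁻¹ = (1 : MvPolynomial σ K) := by
      rw [← C_mul, mul_inv_cancel₀ ha, C_1]
    simp only [hyperplaneSubst, ↓reduceDIte, neg_mul, map_neg, map_mul, algHom_C, algebraMap_eq,
      map_sum, rename_X, sub_neg_eq_add, smul_eq_C_mul]
    linear_combination (-X k) * hinv
  · simp [hyperplaneSubst, hk]

theorem mem_span_singleton_of_bind₁_hyperplaneSubst_eq_zero (ha : a k₀ ≠ 0)
    {y : MvPolynomial σ K} (hy : y.IsHomogeneous 1) (h : bind₁ (hyperplaneSubst a k₀) y = 0) :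
    y ∈ K ∙ (∑ k, a k • X k : MvPolynomial σ K) := by
  have hL : (∑ k, a k • X k : MvPolynomial σ K).IsHomogeneous 1 :=
    IsHomogeneous.sum _ _ _ fun k _ => by simpa [smul_eq_C_mul] using isHomogeneous_C_mul_X (a k) k
  obtain ⟨Q, hQ, rfl⟩ := hL.exists_eq_mul_of_dvd (e := 0) hy
    (dvd_of_bind₁_hyperplaneSubst_eq_zero ha h)
  rw [totalDegree_eq_zero_iff_eq_C.mp ((totalDegree_zero_iff_isHomogeneous σ).mpr hQ), mul_comm,
    ← smul_eq_C_mul]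
  exact Submodule.smul_mem _ _ (Submodule.mem_span_singleton_self _)

end Hyperplane

section Cage

variable {K : Type*} [Field K] {κ α σ : Type*}

/-- The span of the products `𝓛_j = ∏_{i ∈ S j} L j i` of the colours with exactly `e` lines. -/
noncomputable def colorSpan (S : κ → Finset α) (L : κ → α → MvPolynomial σ K) (e : ℕ) :
    Submodule K (MvPolynomial σ K) :=
  Submodule.span K ((fun j => ∏ i ∈ S j, L j i) '' {j | #(S j) = e})

section colorSpan

variable {S : κ → Finset α} {L : κ → α → MvPolynomial σ K} {e : ℕ}

theorem colorSpan_le_homogeneousSubmodule (hL : ∀ j, ∀ i ∈ S j, (L j i).IsHomogeneous 1) :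
    colorSpan S L e ≤ homogeneousSubmodule σ K e := by
  rw [colorSpan, Submodule.span_le]
  rintro _ ⟨j, rfl : #(S j) = e, rfl⟩
  simpa using IsHomogeneous.prod (S j) (L j) (fun _ => 1) (hL j)

theorem colorSpan_comp_le {κ' : Type*} (f : κ' → κ) :
    colorSpan (S ∘ f) (L ∘ f) e ≤ colorSpan S L e := by
  refine Submodule.span_mono ?_
  rintro _ ⟨j, hj, rfl⟩
  exact ⟨f j, hj, rfl⟩

theorem colorSpan_map {τ : Type*} (φ : MvPolynomial σ K →ₐ[K] MvPolynomial τ K) :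
    colorSpan S (fun j i => φ (L j i)) e = (colorSpan S L e).map φ.toLinearMap := by
  rw [colorSpan, colorSpan, ← Submodule.span_image, ← Set.image_comp]
  simp [Function.comp_def, map_prod]

theorem mul_mem_colorSpan_erase [DecidableEq κ] [DecidableEq α] {j₀ : κ} {i₀ : α}
    (hi₀ : i₀ ∈ S j₀) (he : ∀ j, e + 1 ≤ #(S j)) {Q : MvPolynomial σ K}
    (hQ : Q ∈ colorSpan (Function.update S j₀ ((S j₀).erase i₀)) L e) :
    L j₀ i₀ * Q ∈ colorSpan S L (e + 1) := by
  have hmap := Submodule.mem_map_of_mem (f := LinearMap.mulLeft K (L j₀ i₀)) hQ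
  rw [colorSpan, ← Submodule.span_image] at hmap
  refine Submodule.span_mono ?_ hmap
  rintro _ ⟨_, ⟨j, hj, rfl⟩, rfl⟩
  obtain rfl : j = j₀ := by
    by_contra hne
    simp only [Set.mem_ofPred_eq, Function.update_of_ne hne] at hj
    have := he j
    omega
  refine ⟨j, ?_, ?_⟩
  · have := card_erase_of_mem hi₀
    have := he j
    simp only [Set.mem_ofPred_eq, Function.update_self] at hj ⊢
    omega
  · simp [mul_prod_erase _ _ hi₀]

theorem mem_colorSpan_zero [Fintype κ] [DecidableEq κ] {p : (κ → α) → σ → K}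
    {P : MvPolynomial σ K} (hP : P.IsHomogeneous 0)
    (hvan : ∀ I ∈ piFinset S, eval (p I) P = 0) : P ∈ colorSpan S L 0 := by
  have hPC := totalDegree_eq_zero_iff_eq_C.mp ((totalDegree_zero_iff_isHomogeneous σ).mpr hP)
  rw [hPC]
  by_cases hS : ∀ j, (S j).Nonempty
  · obtain ⟨I, hI⟩ := piFinset_nonempty.mpr hS
    have hc := hvan I hI
    rw [hPC, eval_C] at hc
    simp [hc]
  · push Not at hS
    obtain ⟨j, hj⟩ := hS
    rw [← mul_one (C _), ← smul_eq_C_mul]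
    refine Submodule.smul_mem _ _ (Submodule.subset_span ⟨j, ?_, ?_⟩) <;> simp [hj]

end colorSpan

variable [Fintype κ] [DecidableEq κ]

/-- A cage whose colour `j` consists of the lines `L j i` for `i ∈ S j`, with a node `p I` for
each `I ∈ piFinset S`; the `d^n`-cages are those with `S j = univ` in `Fin d`. -/
structure IsCage (S : κ → Finset α) (L : κ → α → MvPolynomial σ K) (p : (κ → α) → σ → K) :
    Prop where
  isHomogeneous : ∀ j, ∀ i ∈ S j, (L j i).IsHomogeneous 1
  linearIndependent : ∀ I ∈ piFinset S, LinearIndependent K fun j => L j (I j)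
  eval_eq_zero_iff : ∀ I ∈ piFinset S, ∀ v, (∀ j, eval v (L j (I j)) = 0) ↔ ∃ c : K, v = c • p I
  eval_ne_zero : ∀ I ∈ piFinset S, ∀ j, ∀ i ∈ S j, i ≠ I j → eval (p I) (L j i) ≠ 0

namespace IsCage

variable {S : κ → Finset α} {L : κ → α → MvPolynomial σ K} {p : (κ → α) → σ → K}

theorem eval_node (hC : IsCage S L p) {I : κ → α} (hI : I ∈ piFinset S) (j : κ) :
    eval (p I) (L j (I j)) = 0 :=
  (hC.eval_eq_zero_iff I hI (p I)).mpr ⟨1, (one_smul K _).symm⟩ j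

theorem eval_eq_zero_of_mem_colorSpan (hC : IsCage S L p) {I : κ → α} (hI : I ∈ piFinset S)
    {e : ℕ} {T : MvPolynomial σ K} (hT : T ∈ colorSpan S L e) : eval (p I) T = 0 := by
  have hle : colorSpan S L e ≤ LinearMap.ker (aeval (p I)).toLinearMap := by
    rw [colorSpan, Submodule.span_le]
    rintro _ ⟨j, -, rfl⟩
    simpa [coe_aeval_eq_eval] using prod_eq_zero (mem_piFinset.mp hI j) (hC.eval_node hI j)
  simpa [coe_aeval_eq_eval] using hle hT

theorem mono (hC : IsCage S L p) {S' : κ → Finset α} (hS : ∀ j, S' j ⊆ S j) : IsCage S' L p where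
  isHomogeneous j i hi := hC.isHomogeneous j i (hS j hi)
  linearIndependent I hI := hC.linearIndependent I (piFinset_subset _ _ hS hI)
  eval_eq_zero_iff I hI := hC.eval_eq_zero_iff I (piFinset_subset _ _ hS hI)
  eval_ne_zero I hI j i hi := hC.eval_ne_zero I (piFinset_subset _ _ hS hI) j i (hS j hi)

theorem ne_zero (hC : IsCage S L p) (hS : ∀ j, (S j).Nonempty) {j : κ} {i : α} (hi : i ∈ S j) :
    L j i ≠ 0 := by
  obtain ⟨I, hI⟩ := piFinset_nonempty.mpr hS
  simpa using (hC.linearIndependent _ (Function.update_mem_piFinset hI hi)).ne_zero j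

theorem eq_zero_of_isEmpty [IsEmpty κ] [Fintype σ] [Infinite K] (hC : IsCage S L p) {n : ℕ}
    {P : MvPolynomial σ K} (hP : P.IsHomogeneous n)
    (hvan : ∀ I ∈ piFinset S, eval (p I) P = 0) : P = 0 := by
  have hI : (isEmptyElim : κ → α) ∈ piFinset S := mem_piFinset.mpr isEmptyElim
  refine hP.eq_zero_of_forall_eval_eq_zero fun v => ?_
  obtain ⟨c, rfl⟩ := (hC.eval_eq_zero_iff _ hI v).mp isEmptyElim
  rw [hP.eval_smul, hvan _ hI, mul_zero]

theorem eval_eq_zero_of_eq_mul [DecidableEq α] (hC : IsCage S L p) {j₀ : κ} {i₀ : α}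
    (hi₀ : i₀ ∈ S j₀) {R Q : MvPolynomial σ K} (hR : ∀ I ∈ piFinset S, eval (p I) R = 0)
    (hRQ : R = L j₀ i₀ * Q) {I : κ → α}
    (hI : I ∈ piFinset (Function.update S j₀ ((S j₀).erase i₀))) : eval (p I) Q = 0 := by
  have hIS : I ∈ piFinset S := piFinset_subset _ _ (update_erase_subset S j₀ i₀) hI
  have hI₀ : i₀ ≠ I j₀ := by
    have := mem_piFinset.mp hI j₀
    rw [Function.update_self, mem_erase] at this
    exact this.1.symm
  have hev := hR I hIS
  rw [hRQ, map_mul, mul_eq_zero] at hev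
  exact hev.resolve_left (hC.eval_ne_zero I hIS j₀ i₀ hi₀ hI₀)

section Restrict

variable [Fintype σ] [DecidableEq σ] {m : ℕ} {S : Fin (m + 1) → Finset α}
  {L : Fin (m + 1) → α → MvPolynomial σ K} {p : (Fin (m + 1) → α) → σ → K} {i₀ : α}
  {a : σ → K} {k₀ : σ}

theorem hyperplanePoint_node (hC : IsCage S L p) (hi₀ : i₀ ∈ S 0) (ha : a k₀ ≠ 0)
    (hL₀ : L 0 i₀ = ∑ k, a k • X k) {I : Fin m → α} (hI : I ∈ piFinset fun j => S j.succ) :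
    hyperplanePoint a k₀ (fun k => p (Fin.cons i₀ I) k) = p (Fin.cons i₀ I) := by
  refine hyperplanePoint_restrict ha ?_
  rw [← eval_sum_smul_X, ← hL₀]
  simpa using hC.eval_node (Fin.cons_mem_piFinset hi₀ hI) 0

theorem restrict (hC : IsCage S L p) (hi₀ : i₀ ∈ S 0) (ha : a k₀ ≠ 0)
    (hL₀ : L 0 i₀ = ∑ k, a k • X k) :
    IsCage (fun j => S j.succ) (fun j i => bind₁ (hyperplaneSubst a k₀) (L j.succ i))
      (fun I k => p (Fin.cons i₀ I) k) where
  isHomogeneous j i hi := (hC.isHomogeneous j.succ i hi).bind₁_hyperplaneSubst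
  linearIndependent I hI := by
    refine (hC.linearIndependent _ (Fin.cons_mem_piFinset hi₀ hI)).map_tail
      (f := (bind₁ (hyperplaneSubst a k₀)).toLinearMap) fun y hy hker => ?_
    have hle : Submodule.span K (Set.range fun j => L j.succ (I j))
        ≤ homogeneousSubmodule σ K 1 := by
      rw [Submodule.span_le]
      rintro _ ⟨j, rfl⟩
      exact hC.isHomogeneous j.succ (I j) (mem_piFinset.mp hI j)
    simpa [hL₀] using mem_span_singleton_of_bind₁_hyperplaneSubst_eq_zero ha (hle hy) hker
  eval_eq_zero_iff I hI v := by
    constructor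
    · intro hv
      have hall : ∀ j,
          eval (hyperplanePoint a k₀ v) (L j ((Fin.cons i₀ I : Fin (m + 1) → α) j)) = 0 :=
        Fin.cases (by simpa [hL₀, eval_sum_smul_X] using sum_mul_hyperplanePoint ha v)
          fun j => by simpa [eval_bind₁_hyperplaneSubst] using hv j
      obtain ⟨c, hc⟩ := (hC.eval_eq_zero_iff _ (Fin.cons_mem_piFinset hi₀ hI) _).mp hall
      exact ⟨c, funext fun k => by simpa using congrFun hc k⟩
    · rintro ⟨c, rfl⟩ j
      have hhom := (hC.isHomogeneous j.succ (I j) (mem_piFinset.mp hI j)).bind₁_hyperplaneSubst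
        (a := a) (k₀ := k₀)
      rw [hhom.eval_smul, eval_bind₁_hyperplaneSubst, hyperplanePoint_node hC hi₀ ha hL₀ hI]
      simpa using Or.inr (hC.eval_node (Fin.cons_mem_piFinset hi₀ hI) j.succ)
  eval_ne_zero I hI j i hi hij := by
    rw [eval_bind₁_hyperplaneSubst, hyperplanePoint_node hC hi₀ ha hL₀ hI]
    exact hC.eval_ne_zero _ (Fin.cons_mem_piFinset hi₀ hI) j.succ i hi (by simpa using hij)

end Restrict

theorem mem_colorSpan [Infinite K] [DecidableEq α] [Fintype σ] [DecidableEq σ]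
    {m e : ℕ} {S : Fin m → Finset α} {L : Fin m → α → MvPolynomial σ K}
    {p : (Fin m → α) → σ → K} (hC : IsCage S L p) (he : ∀ j, e ≤ #(S j))
    {P : MvPolynomial σ K} (hP : P.IsHomogeneous e) (hvan : ∀ I ∈ piFinset S, eval (p I) P = 0) :
    P ∈ colorSpan S L e := by
  induction e generalizing m σ with
  | zero => exact mem_colorSpan_zero hP hvan
  | succ e ihe =>
  induction m generalizing σ with
  | zero => simp [hC.eq_zero_of_isEmpty hP hvan]
  | succ m ihm =>
  have hS : ∀ j, (S j).Nonempty := fun j => card_pos.mp (by have := he j; omega)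
  obtain ⟨i₀, hi₀⟩ := hS 0
  have hL₀ := hC.isHomogeneous 0 i₀ hi₀
  obtain ⟨a, ha_eq⟩ := hL₀.exists_eq_sum_smul_X
  obtain ⟨k₀, ha⟩ : ∃ k₀, a k₀ ≠ 0 := by
    by_contra! h
    exact hC.ne_zero hS hi₀ (by simp [ha_eq, h])
  have hvan' : ∀ I ∈ piFinset fun j => S j.succ,
      eval (fun k : {k // k ≠ k₀} => p (Fin.cons i₀ I) k) (bind₁ (hyperplaneSubst a k₀) P) = 0 := by
    intro I hI
    rw [eval_bind₁_hyperplaneSubst, hyperplanePoint_node hC hi₀ ha ha_eq hI]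
    exact hvan _ (Fin.cons_mem_piFinset hi₀ hI)
  have hres := ihm (hC.restrict hi₀ ha ha_eq) (fun j => he j.succ) hP.bind₁_hyperplaneSubst hvan'
  rw [colorSpan_map] at hres
  obtain ⟨T, hT, hTP⟩ := Submodule.mem_map.mp hres
  rw [AlgHom.toLinearMap_apply] at hTP
  replace hT := colorSpan_comp_le Fin.succ hT
  obtain ⟨Q, hQ, hPQ⟩ := hL₀.exists_eq_mul_of_dvd (P := P - T)
    (by rw [add_comm]; exact hP.sub (colorSpan_le_homogeneousSubmodule hC.isHomogeneous hT))
    (by rw [ha_eq]; exact dvd_of_bind₁_hyperplaneSubst_eq_zero ha (by rw [map_sub, hTP, sub_self]))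
  have hQ' : Q ∈ colorSpan (Function.update S 0 ((S 0).erase i₀)) L e := by
    refine ihe (hC.mono (update_erase_subset S 0 i₀)) (fun j => ?_) hQ
      fun I hI => hC.eval_eq_zero_of_eq_mul hi₀ (fun I hI => ?_) hPQ hI
    · have := he j
      rcases eq_or_ne j 0 with rfl | h
      · simp only [Function.update_self, card_erase_of_mem hi₀]
        omega
      · simp only [Function.update_of_ne h]
        omega
    · rw [map_sub, hvan I hI, hC.eval_eq_zero_of_mem_colorSpan hI hT, sub_zero]
  have hmem := add_mem hT (mul_mem_colorSpan_erase hi₀ he hQ')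
  rwa [← hPQ, add_sub_cancel] at hmem

theorem linearIndependent_prod [Infinite K] [Fintype σ] (hC : IsCage S L p) (hS : ∀ j, 1 < #(S j)) :
    LinearIndependent K fun j => ∏ i ∈ S j, L j i := by
  rw [Fintype.linearIndependent_iff]
  intro c hc j₀
  obtain ⟨I, hI⟩ := piFinset_nonempty.mpr fun j => card_pos.mp (zero_lt_one.trans (hS j))
  obtain ⟨i', hi', hne⟩ := Finset.exists_mem_ne (hS j₀) (I j₀)
  set I' := Function.update I j₀ i'
  have hI' : I' ∈ piFinset S := Function.update_mem_piFinset hI hi'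
  obtain ⟨t, ht⟩ := exists_prod_add_mul_ne_zero (S j₀)
    (x := fun i => eval (p I) (L j₀ i)) (y := fun i => eval (p I') (L j₀ i)) fun i hi => by
      rcases eq_or_ne i (I j₀) with rfl | h
      · exact Or.inr (hC.eval_ne_zero I' hI' j₀ _ hi (by simpa [I'] using hne.symm))
      · exact Or.inl (hC.eval_ne_zero I hI j₀ i hi h)
  have hprod : eval (p I + t • p I') (∏ i ∈ S j₀, L j₀ i) ≠ 0 := by
    rwa [map_prod, prod_congr rfl fun i hi => (hC.isHomogeneous j₀ i hi).eval_add_smul _ _ _]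
  have hzero : ∀ j ≠ j₀, eval (p I + t • p I') (∏ i ∈ S j, L j i) = 0 := fun j hj => by
    have hIj := mem_piFinset.mp hI j
    have hI'j : eval (p I') (L j (I j)) = 0 := by simpa [I', hj] using hC.eval_node hI' j
    rw [map_prod]
    refine prod_eq_zero hIj ?_
    rw [(hC.isHomogeneous j (I j) hIj).eval_add_smul, hC.eval_node hI j, hI'j, mul_zero, add_zero]
  have hev := congrArg (eval (p I + t • p I')) hc
  simp only [map_sum, smul_eval, map_zero] at hev
  rw [sum_eq_single j₀ (fun j _ hj => by rw [hzero j hj, mul_zero]) (by simp)] at hev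
  exact (mul_eq_zero.mp hev).resolve_right hprod

end IsCage

end Cage

theorem space_of_degree_d_polys_through_all_nodes_general
    {K : Type*} [Field K] [Infinite K] (n d : ℕ) (hd : 1 ≤ d)
    (L : Fin n → Fin d → MvPolynomial (Fin (n + 1)) K)
    (hL : ∀ j i, (L j i).IsHomogeneous 1)
    (p : (Fin n → Fin d) → Fin (n + 1) → K)
    (hind : ∀ I : Fin n → Fin d, LinearIndependent K fun j => L j (I j))
    (hline : ∀ (I : Fin n → Fin d) (v : Fin (n + 1) → K),
      (∀ j, MvPolynomial.eval v (L j (I j)) = 0) ↔ ∃ c : K, v = c • p I)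
    (hne : ∀ (j : Fin n) (i : Fin d) (I : Fin n → Fin d),
      i ≠ I j → MvPolynomial.eval (p I) (L j i) ≠ 0) :
    {P : MvPolynomial (Fin (n + 1)) K | P.IsHomogeneous d ∧
        ∀ I : Fin n → Fin d, MvPolynomial.eval (p I) P = 0}
      = ↑(Submodule.span K (Set.range fun j : Fin n => ∏ i, L j i)) ∧
    LinearIndependent K (fun j : Fin n => ∏ i, L j i) ∧
    Module.finrank K
      ↥(Submodule.span K (Set.range fun j : Fin n => ∏ i, L j i)) = n := by
  have hC : IsCage (fun _ => univ) L p :=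
    ⟨fun j i _ => hL j i, fun I _ => hind I, fun I _ => hline I, fun I _ j i _ => hne j i I⟩
  have hspan : colorSpan (fun _ => univ) L d =
      Submodule.span K (Set.range fun j => ∏ i, L j i) := by
    simp [colorSpan]
  have hli : LinearIndependent K fun j : Fin n => ∏ i, L j i := by
    rcases eq_or_lt_of_le hd with rfl | hd
    · simpa using hind 0
    · exact hC.linearIndependent_prod fun _ => by simpa using hd
  refine ⟨?_, hli, by rw [finrank_span_eq_card hli, Fintype.card_fin]⟩
  ext P
  rw [← hspan]
  constructor
  · rintro ⟨hP, hvan⟩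
    exact hC.mem_colorSpan (fun _ => by simp) hP fun I _ => hvan I
  · intro hP
    exact ⟨colorSpan_le_homogeneousSubmodule hC.isHomogeneous hP,
      fun I => hC.eval_eq_zero_of_mem_colorSpan (by simp) hP⟩

/-- The space of homogeneous polynomials of degree `d` (together with `0`)
vanishing at all nodes of a `d^{n}`-cage is exactly the `K`-linear span of
`𝓛_1, …, 𝓛_n`; the `𝓛_j` are linearly independent, so this space has
dimension `n`. -/
theorem space_of_degree_d_polys_through_all_nodes
    {K : Type*} [Field K] [Infinite K] (n d : ℕ) (hn : 1 ≤ n) (hd : 1 ≤ d)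
    (L : Fin n → Fin d → MvPolynomial (Fin (n + 1)) K)
    (hL : ∀ j i, (L j i).IsHomogeneous 1)
    (p : (Fin n → Fin d) → Fin (n + 1) → K)
    (hp0 : ∀ I, p I ≠ 0)
    (hind : ∀ I : Fin n → Fin d, LinearIndependent K fun j => L j (I j))
    (hline : ∀ (I : Fin n → Fin d) (v : Fin (n + 1) → K),
      (∀ j, MvPolynomial.eval v (L j (I j)) = 0) ↔ ∃ c : K, v = c • p I)
    (hne : ∀ (j : Fin n) (i : Fin d) (I : Fin n → Fin d),
      i ≠ I j → MvPolynomial.eval (p I) (L j i) ≠ 0) :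
    {P : MvPolynomial (Fin (n + 1)) K | P.IsHomogeneous d ∧
        ∀ I : Fin n → Fin d, MvPolynomial.eval (p I) P = 0}
      = ↑(Submodule.span K (Set.range fun j : Fin n => ∏ i, L j i)) ∧
    LinearIndependent K (fun j : Fin n => ∏ i, L j i) ∧
    Module.finrank K
      ↥(Submodule.span K (Set.range fun j : Fin n => ∏ i, L j i)) = n :=
  space_of_degree_d_polys_through_all_nodes_general n d hd L hL p hind hline hne
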